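/- With cylindrical hyperbolic cone metric modification: for the choice φ(δ) = c/δ and ψ(δ) = cδ near δ = 0 (c > 0 constant), the three curvatures K₁₂, K₁₃, K₂₃ of the metric φ²dδ² + sinh²δ dθ² + ψ²dλ² are negative and bounded away from 0 for δ in any interval (0, ε] with ε small, and the volume form φ(δ) sinh δ ψ(δ) dδ dθ dλ has finite integral over (0,ε] × S¹ × S¹. -/

import Mathlib

/-! For `φ = c/δ`, `ψ = cδ` one computes `K₁₃ = -1/c²`, `K₂₃ = -δ coth δ / c²` and
`K₁₂ = K₂₃ - δ²/c²`; since `tanh δ ≤ δ` for `δ ≥ 0`, all three are `≤ -1/c²`. The radial length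
`∫ c/δ` diverges logarithmically at `0`, while the volume density `φ sinh ψ = c² sinh δ` is
continuous. -/

open MeasureTheory Real

/-- Sectional curvature `K₁₂` of `φ(δ)²dδ² + sinh²δ dθ² + ψ(δ)²dλ²`. -/
noncomputable def K12 (φ : ℝ → ℝ) (δ : ℝ) : ℝ :=
  (1 / (φ δ) ^ 2) * (deriv φ δ * (Real.cosh δ / Real.sinh δ) / φ δ - 1)

/-- Sectional curvature `K₁₃`. -/
noncomputable def K13 (φ ψ : ℝ → ℝ) (δ : ℝ) : ℝ :=
  -(1 / (φ δ) ^ 2) * (deriv (deriv ψ) δ / ψ δ - deriv φ δ * deriv ψ δ / (φ δ * ψ δ))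

/-- Sectional curvature `K₂₃`. -/
noncomputable def K23 (φ ψ : ℝ → ℝ) (δ : ℝ) : ℝ :=
  -(deriv ψ δ * (Real.cosh δ / Real.sinh δ)) / ((φ δ) ^ 2 * ψ δ)

lemma Real.sinh_le_mul_cosh {x : ℝ} (hx : 0 ≤ x) : sinh x ≤ x * cosh x := by
  have hderiv : ∀ t, HasDerivAt (fun t => t * cosh t - sinh t) (t * sinh t) t := fun t =>
    (((hasDerivAt_id' t).mul (hasDerivAt_cosh t)).sub (hasDerivAt_sinh t)).congr_deriv (by ring)
  have hmono : MonotoneOn (fun t => t * cosh t - sinh t) (Set.Ici 0) :=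
    monotoneOn_of_hasDerivWithinAt_nonneg (convex_Ici 0)
      (continuous_iff_continuousAt.2 fun t => (hderiv t).continuousAt).continuousOn
      (fun t _ => (hderiv t).hasDerivWithinAt)
      (fun t ht => by
        rw [interior_Ici] at ht
        exact mul_nonneg (le_of_lt ht) (sinh_nonneg_iff.2 (le_of_lt ht)))
  simpa using hmono Set.self_mem_Ici hx hx

lemma Real.one_le_mul_cosh_div_sinh {x : ℝ} (hx : 0 < x) : 1 ≤ x * (cosh x / sinh x) := by
  rw [← mul_div_assoc, one_le_div (sinh_pos_iff.2 hx)]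
  exact sinh_le_mul_cosh hx.le

section CurvatureFormulas

variable {c δ : ℝ}

lemma K12_const_div (hc : c ≠ 0) (hδ : δ ≠ 0) :
    K12 (fun s => c / s) δ = -(δ * (cosh δ / sinh δ) + δ ^ 2) / c ^ 2 := by
  rw [K12, deriv_const_div_id]
  field_simp
  ring

lemma K13_const_div_const_mul (hc : c ≠ 0) (hδ : δ ≠ 0) :
    K13 (fun s => c / s) (fun s => c * s) δ = -1 / c ^ 2 := by
  have hψ' : deriv (fun s => c * s) = fun _ => c := funext fun s => by simp
  rw [K13, deriv_const_div_id, hψ', deriv_const]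
  field_simp
  ring

lemma K23_const_div_const_mul (hc : c ≠ 0) (hδ : δ ≠ 0) :
    K23 (fun s => c / s) (fun s => c * s) δ = -(δ * (cosh δ / sinh δ)) / c ^ 2 := by
  rw [K23, show deriv (fun s => c * s) δ = c by simp]
  field_simp

end CurvatureFormulas

lemma not_intervalIntegrable_const_div {c b : ℝ} (hc : c ≠ 0) (hb : b ≠ 0) :
    ¬ IntervalIntegrable (fun δ => c / δ) volume 0 b := by
  intro h
  have hinv : IntervalIntegrable (fun δ : ℝ => δ⁻¹) volume 0 b := by
    simpa [div_eq_mul_inv, ← mul_assoc, inv_mul_cancel₀ hc] using h.const_mul c⁻¹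
  rw [intervalIntegrable_inv_iff] at hinv
  rcases hinv with h0b | h0
  · exact hb h0b.symm
  · exact h0 Set.left_mem_uIcc

lemma intervalIntegrable_const_div_mul_sinh_mul_const_mul (c a b : ℝ) :
    IntervalIntegrable (fun δ => (c / δ) * sinh δ * (c * δ)) volume a b := by
  have hsinh : IntervalIntegrable (fun δ => c ^ 2 * sinh δ) volume a b :=
    (continuous_const.mul continuous_sinh).intervalIntegrable a b
  refine hsinh.congr_ae (ae_restrict_of_ae ((volume.ae_ne 0).mono fun δ hδ => ?_))
  field_simp

/-- **The modified metric near the singularity is complete, negatively curved and of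
finite volume.**  For `φ(δ) = c/δ` and `ψ(δ) = cδ` (`c > 0`), on any sufficiently small
interval `(0, ε]` the three curvatures `K₁₂, K₁₃, K₂₃` of the metric
`φ²dδ² + sinh²δ dθ² + ψ²dλ²` are negative and bounded away from `0`, the radial
integral `∫₀^ε φ` diverges (completeness of the end), and the volume form
`φ(δ) sinh δ ψ(δ) dδ dθ dλ` has finite integral over `(0,ε] × S¹ × S¹`. -/
theorem modified_metric_negatively_curved_finite_volume (c : ℝ) (hc : 0 < c) :
    ∃ ε₀ > 0, ∀ ε : ℝ, 0 < ε → ε ≤ ε₀ →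
      (∃ m > 0, ∀ δ ∈ Set.Ioc (0:ℝ) ε,
        K12 (fun s => c / s) δ ≤ -m ∧
        K13 (fun s => c / s) (fun s => c * s) δ ≤ -m ∧
        K23 (fun s => c / s) (fun s => c * s) δ ≤ -m) ∧
      ¬ IntervalIntegrable (fun δ => c / δ) volume 0 ε ∧
      IntervalIntegrable (fun δ => (c / δ) * Real.sinh δ * (c * δ)) volume 0 ε := by
  refine ⟨1, one_pos, fun ε hε _ => ⟨⟨1 / c ^ 2, by positivity, fun δ hδ => ?_⟩,
    not_intervalIntegrable_const_div hc.ne' hε.ne',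
    intervalIntegrable_const_div_mul_sinh_mul_const_mul c 0 ε⟩⟩
  have hcoth := one_le_mul_cosh_div_sinh hδ.1
  rw [K12_const_div hc.ne' hδ.1.ne', K13_const_div_const_mul hc.ne' hδ.1.ne',
    K23_const_div_const_mul hc.ne' hδ.1.ne', ← neg_div]
  refine ⟨?_, le_rfl, ?_⟩ <;> gcongr; nlinarith
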